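/- Fix n ≥ 1, grid spacing h > 0, time step τ > 0, and real parameters p₁ ≠ 0, p₂. Let A0, Π0, λ : (Fin n → ℤ) → ℝ and Aᵢ, Πᵢ : (Fin n → ℤ) → ℝ (for i ∈ Fin n) be grid fields at time level ℓ, with primed versions at level ℓ+1, satisfying the structure-preserving-scheme equations: (A0′ − A0)/τ = (1/4)(λ′ + λ)(Π0′ + Π0) − (1/2)Σᵢ δᵢ(Aᵢ′ + Aᵢ); and for each i, (Πᵢ′ − Πᵢ)/τ = (p₂/2)(Aᵢ′ + Aᵢ) − (1/2)δᵢ(Π0′ + Π0) + (1/(2p₁))Σₘ[δₘδₘ(Aᵢ′ + Aᵢ) − δᵢδₘ(Aₘ′ + Aₘ)]. Define C₁ = Π0, C₁′ = Π0′, C₂ = −p₂·A0 − Σᵢ δᵢΠᵢ, C₂′ = −p₂·A0′ − Σᵢ δᵢΠᵢ′. Then (C₂′ − C₂)/τ = −(p₂/4)(λ′ + λ)(C₁′ + C₁) + (1/2)Σᵢ δᵢδᵢ(C₁′ + C₁) as grid functions (in the first term the product of grid functions is pointwise). -/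
import Mathlib

open scoped BigOperators

/-- The `i`-th standard unit vector of `ℤⁿ`. -/
def gridE {n : ℕ} (i : Fin n) : Fin n → ℤ := fun j => if j = i then 1 else 0

/-- First-order central difference operator in direction `i` with grid spacing `h`:
`(δᵢf)(k) = (f(k + eᵢ) − f(k − eᵢ))/(2h)`. -/
noncomputable def cdiff {n : ℕ} (h : ℝ) (i : Fin n) (f : (Fin n → ℤ) → ℝ) :
    (Fin n → ℤ) → ℝ :=
  fun k => (f (k + gridE i) - f (k - gridE i)) / (2 * h)

lemma cdiff_add {n : ℕ} (h : ℝ) (i : Fin n) (f g : (Fin n → ℤ) → ℝ) (k : Fin n → ℤ) :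
    cdiff h i (fun x => f x + g x) k = cdiff h i f k + cdiff h i g k := by
  simp [cdiff]; ring

lemma cdiff_sub {n : ℕ} (h : ℝ) (i : Fin n) (f g : (Fin n → ℤ) → ℝ) (k : Fin n → ℤ) :
    cdiff h i (fun x => f x - g x) k = cdiff h i f k - cdiff h i g k := by
  simp [cdiff]; ring

lemma cdiff_const_mul {n : ℕ} (h : ℝ) (i : Fin n) (c : ℝ) (f : (Fin n → ℤ) → ℝ)
    (k : Fin n → ℤ) :
    cdiff h i (fun x => c * f x) k = c * cdiff h i f k := by
  simp [cdiff]; ring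

lemma cdiff_lin {n : ℕ} (h : ℝ) (i : Fin n) (a b c : ℝ) (f g s : (Fin n → ℤ) → ℝ)
    (k : Fin n → ℤ) :
    cdiff h i (fun x => a * f x - b * g x + c * s x) k
      = a * cdiff h i f k - b * cdiff h i g k + c * cdiff h i s k := by
  simp [cdiff]; ring

lemma cdiff_sum {n : ℕ} (h : ℝ) (i : Fin n) (f : Fin n → (Fin n → ℤ) → ℝ)
    (k : Fin n → ℤ) :
    cdiff h i (fun x => ∑ m : Fin n, f m x) k = ∑ m : Fin n, cdiff h i (f m) k := by
  simp only [cdiff, ← Finset.sum_sub_distrib, Finset.sum_div]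

lemma cdiff_comm {n : ℕ} (h : ℝ) (i m : Fin n) (f : (Fin n → ℤ) → ℝ) :
    cdiff h i (cdiff h m f) = cdiff h m (cdiff h i f) := by
  funext k
  simp only [cdiff]
  rw [show k + gridE m + gridE i = k + gridE i + gridE m from add_right_comm _ _ _,
    show k + gridE m - gridE i = k - gridE i + gridE m from (sub_add_eq_add_sub _ _ _).symm,
    show k - gridE m + gridE i = k + gridE i - gridE m from sub_add_eq_add_sub _ _ _,
    show k - gridE m - gridE i = k - gridE i - gridE m from sub_right_comm _ _ _]
  ring

theorem sps_constraint_C2_propagation {n : ℕ} (hn : 1 ≤ n) (h τ : ℝ)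
    (hh : 0 < h) (hτ : 0 < τ) (p₁ p₂ : ℝ) (hp₁ : p₁ ≠ 0)
    (A0 A0' Pi0 Pi0' lam lam' : (Fin n → ℤ) → ℝ)
    (A A' Pi Pi' : Fin n → (Fin n → ℤ) → ℝ)
    (eA0 : ∀ k, (A0' k - A0 k) / τ =
        (1 / 4) * (lam' k + lam k) * (Pi0' k + Pi0 k)
        - (1 / 2) * ∑ i : Fin n, cdiff h i (fun x => A' i x + A i x) k)
    (ePi : ∀ (i : Fin n) (k), (Pi' i k - Pi i k) / τ =
        (p₂ / 2) * (A' i k + A i k)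
        - (1 / 2) * cdiff h i (fun x => Pi0' x + Pi0 x) k
        + (1 / (2 * p₁)) * ∑ m : Fin n,
            (cdiff h m (cdiff h m (fun x => A' i x + A i x)) k
              - cdiff h i (cdiff h m (fun x => A' m x + A m x)) k))
    (C₁ C₁' C₂ C₂' : (Fin n → ℤ) → ℝ)
    (hC₁ : C₁ = Pi0) (hC₁' : C₁' = Pi0')
    (hC₂ : C₂ = fun k => -p₂ * A0 k - ∑ i : Fin n, cdiff h i (Pi i) k)
    (hC₂' : C₂' = fun k => -p₂ * A0' k - ∑ i : Fin n, cdiff h i (Pi' i) k) :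
    ∀ k, (C₂' k - C₂ k) / τ =
        -(p₂ / 4) * (lam' k + lam k) * (C₁' k + C₁ k)
        + (1 / 2) * ∑ i : Fin n, cdiff h i (cdiff h i (fun x => C₁' x + C₁ x)) k := by
  subst hC₁ hC₁' hC₂ hC₂'
  intro k
  have hτ' : τ ≠ 0 := hτ.ne'
  set B : Fin n → (Fin n → ℤ) → ℝ := fun i x => A' i x + A i x with hB
  set P0 : (Fin n → ℤ) → ℝ := fun x => C₁' x + C₁ x with hP0
  -- update form of the A0 evolution equation
  have hA0 : A0' = fun x => A0 x + τ *
      ((1 / 4) * (lam' x + lam x) * P0 x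
        - (1 / 2) * ∑ i : Fin n, cdiff h i (B i) x) := by
    funext x
    have := eA0 x
    rw [div_eq_iff hτ'] at this
    simp only [hP0, hB]
    linarith
  set R : Fin n → (Fin n → ℤ) → ℝ := fun i x =>
      (p₂ / 2) * B i x - (1 / 2) * cdiff h i P0 x
        + (1 / (2 * p₁)) * ∑ m : Fin n,
            (cdiff h m (cdiff h m (B i)) x - cdiff h i (cdiff h m (B m)) x) with hR
  have hPi : ∀ i : Fin n, Pi' i = fun x => Pi i x + τ * R i x := by
    intro i
    funext x
    have := ePi i x
    rw [div_eq_iff hτ'] at this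
    simp only [hR, hB, hP0]
    linarith
  -- expand the cdiff of the updated Pi'
  have key : ∀ i : Fin n, cdiff h i (Pi' i) k
      = cdiff h i (Pi i) k + τ * ((p₂ / 2) * cdiff h i (B i) k
        - (1 / 2) * cdiff h i (cdiff h i P0) k
        + (1 / (2 * p₁)) * ∑ m : Fin n,
            (cdiff h i (cdiff h m (cdiff h m (B i))) k
              - cdiff h i (cdiff h i (cdiff h m (B m))) k)) := by
    intro i
    rw [hPi i, cdiff_add, cdiff_const_mul]
    congr 2
    rw [show R i = fun x => (p₂ / 2) * B i x - (1 / 2) * (cdiff h i P0) x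
        + (1 / (2 * p₁)) * (fun y => ∑ m : Fin n,
            (cdiff h m (cdiff h m (B i)) y - cdiff h i (cdiff h m (B m)) y)) x from rfl,
      cdiff_lin, cdiff_sum]
    congr 1
    congr 1
    apply Finset.sum_congr rfl
    intro m _
    rw [cdiff_sub]
  -- the antisymmetric double sum vanishes
  have S3 : ∑ i : Fin n, ∑ m : Fin n,
      (cdiff h i (cdiff h m (cdiff h m (B i))) k
        - cdiff h i (cdiff h i (cdiff h m (B m))) k) = 0 := by
    have swap : ∀ i m : Fin n, cdiff h i (cdiff h m (cdiff h m (B i)))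
        = cdiff h m (cdiff h m (cdiff h i (B i))) := by
      intro i m
      rw [cdiff_comm h i m, cdiff_comm h i m]
    simp only [Finset.sum_sub_distrib]
    rw [sub_eq_zero]
    calc ∑ i : Fin n, ∑ m : Fin n, cdiff h i (cdiff h m (cdiff h m (B i))) k
        = ∑ i : Fin n, ∑ m : Fin n, cdiff h m (cdiff h m (cdiff h i (B i))) k := by
          refine Finset.sum_congr rfl fun i _ => Finset.sum_congr rfl fun m _ => ?_
          rw [swap i m]
      _ = ∑ m : Fin n, ∑ i : Fin n, cdiff h m (cdiff h m (cdiff h i (B i))) k :=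
          Finset.sum_comm
      _ = ∑ i : Fin n, ∑ m : Fin n, cdiff h i (cdiff h i (cdiff h m (B m))) k := rfl
  -- finish by algebra
  simp only [hA0]
  rw [Finset.sum_congr rfl fun i _ => key i, Finset.sum_add_distrib, ← Finset.mul_sum,
    Finset.sum_add_distrib, Finset.sum_sub_distrib, ← Finset.mul_sum, ← Finset.mul_sum,
    ← Finset.mul_sum, S3, mul_zero]
  field_simp
  ring
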